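/- Let n ≥ 4 be even, let Φ and φ_2 be real, and define D_1 = (n−1)φ_2 + (n−1)(n−2)Φ/2 and D_j = −φ_2 − (n−j)Φ for 2 ≤ j ≤ n, and X_D = (D_1,…,D_n). Then for every strictly increasing 2k-tuple r in [1,n] (1 ≤ k ≤ n/2), L_r(X_D) = nφ_2 + n(n−1)Φ/2 − (φ_2 + nΦ) S(r) + Φ L_r(X_N), and equivalently L_r(X_D) = nφ_2 + n(n−2)Φ/2 − (φ_2 + nΦ − Φ/2) S(r) + Φ W(r), where X_N = (1,2,…,n). -/

import Mathlib

open Finset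

-- The sign pattern `c_j` of the alternating form `L_r` for a tuple `r` given by its
-- (1-based) entries `r 1, …, r twok`: `c_1 = 1` and, for `1 ≤ j`, `c_{j+1} = c_j` if
-- `j ∈ {r_1,…,r_{twok}}` and `c_{j+1} = −c_j` otherwise.
open Classical in
noncomputable def signPatN (twok : ℕ) (r : ℕ → ℕ) : ℕ → ℤ
  | 0 => 1
  | 1 => 1
  | (j + 2) =>
    if ∃ i ∈ Finset.Icc 1 twok, r i = j + 1 then signPatN twok r (j + 1)
    else -signPatN twok r (j + 1)

/-- The alternating linear form `L_r(X) = Σ_{j=1}^n c_j x_j`. -/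
noncomputable def LformN (n twok : ℕ) (r : ℕ → ℕ) (X : ℕ → ℝ) : ℝ :=
  ∑ j ∈ Finset.Icc 1 n, (signPatN twok r j : ℝ) * X j

/-- Signature `S(r) = Σ_{j=1}^{2k} (−1)^{j+r_j}`. -/
def SigI (k : ℕ) (r : ℕ → ℕ) : ℤ :=
  ∑ j ∈ Finset.Icc 1 (2 * k), (-1) ^ (j + r j)

/-- Weighted signature `W(r) = Σ_{j=1}^{2k} (−1)^{j+r_j} r_j`. -/
def WsigI (k : ℕ) (r : ℕ → ℕ) : ℤ :=
  ∑ j ∈ Finset.Icc 1 (2 * k), (-1) ^ (j + r j) * (r j : ℤ)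

/-!
Write `c` for the sign pattern and `R = {r_1, …, r_{2k}}`. Because `c_{j+1} = ±c_j` according
as `j ∈ R`, every term satisfies `2 c_j = 2 [j ∈ R] c_j + c_j - c_{j+1}`, so `Σ c_j` and
`Σ j c_j` telescope to sums over `R` plus boundary terms. Counting sign changes gives
`c_j = (-1)^(j + 1 + #(R ∩ [1, j)))`, hence `c_{r_i} = (-1)^(i + r_i)` and, `n` being even,
`c_{n+1} = 1`; the sums over `R` are then `S(r)` and `W(r)`. Finally `X_D` is affine in `j`
except for its first entry, and `c_1 = 1`.
-/

section SignSequence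

variable {α : Type*} [CommRing α] {c : ℕ → α} {R : Finset ℕ}
  (hc : ∀ j, 1 ≤ j → c (j + 1) = if j ∈ R then c j else -c j)
include hc

lemma eq_neg_one_pow_card_inter_Ico_mul {j : ℕ} (hj : 1 ≤ j) :
    c j = (-1) ^ (j + 1 + #(R ∩ Ico 1 j)) * c 1 := by
  induction j, hj using Nat.le_induction with
  | base => simp
  | succ j hj ih =>
    have hj' : j ∉ R ∩ Ico 1 j := by simp
    rw [hc j hj, Nat.Ico_succ_right_eq_insert_Ico hj]
    by_cases hjR : j ∈ R
    · rw [if_pos hjR, inter_insert_of_mem hjR, card_insert_of_notMem hj', ih]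
      ring
    · rw [if_neg hjR, inter_insert_of_notMem hjR, ih]
      ring

lemma two_mul_sum_Icc_eq (m : ℕ) :
    2 * ∑ j ∈ Icc 1 m, c j = 2 * ∑ j ∈ Icc 1 m with j ∈ R, c j + c 1 - c (m + 1) := by
  rw [sum_filter]
  induction m with
  | zero => simp
  | succ m ih =>
    rw [sum_Icc_succ_top (by omega), sum_Icc_succ_top (by omega), mul_add, ih,
      hc (m + 1) (by omega)]
    split_ifs <;> ring

lemma two_mul_sum_Icc_mul_eq (m : ℕ) :
    2 * ∑ j ∈ Icc 1 m, c j * j =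
      2 * ∑ j ∈ Icc 1 m with j ∈ R, c j * j + ∑ j ∈ Icc 1 m, c j - c (m + 1) * m := by
  rw [sum_filter]
  induction m with
  | zero => simp
  | succ m ih =>
    rw [sum_Icc_succ_top (by omega), sum_Icc_succ_top (by omega), sum_Icc_succ_top (by omega),
      mul_add, ih, hc (m + 1) (by omega)]
    push_cast
    split_ifs <;> ring

end SignSequence

section IncreasingTuple

variable {n twok : ℕ} {r : ℕ → ℕ}

lemma signPatN_one : signPatN twok r 1 = 1 := rfl

lemma signPatN_succ (j : ℕ) (hj : 1 ≤ j) :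
    (signPatN twok r (j + 1) : ℝ) =
      if j ∈ (Icc 1 twok).image r then (signPatN twok r j : ℝ) else -signPatN twok r j := by
  obtain ⟨j, rfl⟩ := Nat.exists_eq_add_of_le' hj
  simp only [signPatN, mem_image]
  split_ifs <;> simp_all

variable (hr : StrictMonoOn r (Set.Icc 1 twok))
include hr

lemma image_inter_Ico_eq (hpos : ∀ i ∈ Icc 1 twok, 1 ≤ r i) {i : ℕ}
    (hi : i ∈ Icc 1 twok) : (Icc 1 twok).image r ∩ Ico 1 (r i) = (Ico 1 i).image r := by
  ext x
  rw [mem_Icc] at hi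
  simp only [mem_inter, mem_image, mem_Icc, mem_Ico]
  constructor
  · rintro ⟨⟨a, ha, rfl⟩, -, hlt⟩
    exact ⟨a, ⟨ha.1, (hr.lt_iff_lt ha hi).mp hlt⟩, rfl⟩
  · rintro ⟨a, ha, rfl⟩
    have ha' : a ∈ Set.Icc 1 twok := ⟨ha.1, by omega⟩
    exact ⟨⟨a, ha', rfl⟩, hpos a (mem_Icc.mpr ha'), hr ha' hi ha.2⟩

lemma signPatN_apply_of_strictMonoOn (hpos : ∀ i ∈ Icc 1 twok, 1 ≤ r i) {i : ℕ}
    (hi : i ∈ Icc 1 twok) : (signPatN twok r (r i) : ℝ) = (-1) ^ (i + r i) := by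
  rw [eq_neg_one_pow_card_inter_Ico_mul (c := fun j ↦ (signPatN twok r j : ℝ)) signPatN_succ
    (hpos i hi), image_inter_Ico_eq hr hpos hi, card_image_of_injOn (hr.injOn.mono ?_),
    Nat.card_Ico, signPatN_one]
  · rw [mem_Icc] at hi
    rw [show r i + 1 + (i - 1) = i + r i by omega]
    simp
  · intro x hx
    simp only [coe_Ico, Set.mem_Ico, Set.mem_Icc, mem_Icc] at hx hi ⊢
    omega

lemma image_Icc_subset_Icc (hlb : 1 ≤ r 1) (hub : r twok ≤ n) :
    (Icc 1 twok).image r ⊆ Icc 1 n := by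
  intro x hx
  obtain ⟨i, hi, rfl⟩ := mem_image.mp hx
  have hi' : i ∈ Set.Icc 1 twok := by simpa using hi
  have h1 : 1 ∈ Set.Icc 1 twok := ⟨le_rfl, hi'.1.trans hi'.2⟩
  have htwok : twok ∈ Set.Icc 1 twok := ⟨hi'.1.trans hi'.2, le_rfl⟩
  exact mem_Icc.mpr ⟨hlb.trans (hr.monotoneOn h1 hi' hi'.1),
    (hr.monotoneOn hi' htwok hi'.2).trans hub⟩

lemma signPatN_succ_of_image_subset (hR : (Icc 1 twok).image r ⊆ Icc 1 n) :
    (signPatN twok r (n + 1) : ℝ) = (-1) ^ (n + twok) := by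
  have hRn : (Icc 1 twok).image r ⊆ Ico 1 (n + 1) := fun x hx ↦ by
    have := mem_Icc.mp (hR hx)
    exact mem_Ico.mpr ⟨this.1, by omega⟩
  rw [eq_neg_one_pow_card_inter_Ico_mul (c := fun j ↦ (signPatN twok r j : ℝ)) signPatN_succ
    (by omega), inter_eq_left.mpr hRn, card_image_of_injOn (by simpa using hr.injOn),
    Nat.card_Icc, signPatN_one, add_tsub_cancel_right,
    show n + 1 + 1 + twok = n + twok + 2 by ring]
  simp [pow_add]

variable (hR : (Icc 1 twok).image r ⊆ Icc 1 n)
include hR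

lemma sum_filter_mem_image {β : Type*} [AddCommMonoid β] (f : ℕ → β) :
    ∑ j ∈ Icc 1 n with j ∈ (Icc 1 twok).image r, f j = ∑ i ∈ Icc 1 twok, f (r i) := by
  rw [filter_mem_eq_inter, inter_eq_right.mpr hR, sum_image (by simpa using hr.injOn)]

lemma sum_filter_signPatN_mul (f : ℕ → ℝ) :
    ∑ j ∈ Icc 1 n with j ∈ (Icc 1 twok).image r, (signPatN twok r j : ℝ) * f j =
      ∑ i ∈ Icc 1 twok, (-1) ^ (i + r i) * f (r i) := by
  have hpos : ∀ i ∈ Icc 1 twok, 1 ≤ r i := fun i hi ↦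
    (mem_Icc.mp (hR (mem_image_of_mem r hi))).1
  rw [sum_filter_mem_image hr hR]
  exact sum_congr rfl fun i hi ↦ by rw [signPatN_apply_of_strictMonoOn hr hpos hi]

variable (heven : Even (n + twok))
include heven

lemma LformN_one : LformN n twok r 1 = ∑ i ∈ Icc 1 twok, (-1 : ℝ) ^ (i + r i) := by
  have h := two_mul_sum_Icc_eq (c := fun j ↦ (signPatN twok r j : ℝ)) signPatN_succ n
  have h1 := sum_filter_signPatN_mul hr hR 1
  simp only [Pi.one_apply, mul_one] at h1
  rw [h1, signPatN_succ_of_image_subset hr hR, signPatN_one, heven.neg_one_pow] at h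
  simp only [LformN, Pi.one_apply, mul_one]
  push_cast at h
  linarith

lemma two_mul_LformN_natCast :
    2 * LformN n twok r (fun j ↦ j) =
      2 * ∑ i ∈ Icc 1 twok, (-1 : ℝ) ^ (i + r i) * r i
        + ∑ i ∈ Icc 1 twok, (-1 : ℝ) ^ (i + r i) - n := by
  have h := two_mul_sum_Icc_mul_eq (c := fun j ↦ (signPatN twok r j : ℝ)) signPatN_succ n
  have h1 := LformN_one hr hR heven
  simp only [LformN, Pi.one_apply, mul_one] at h1
  rw [sum_filter_signPatN_mul hr hR (fun j ↦ j), h1, signPatN_succ_of_image_subset hr hR,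
    heven.neg_one_pow, one_mul] at h
  exact h

end IncreasingTuple

lemma LformN_congr {n twok : ℕ} {r : ℕ → ℕ} {X Y : ℕ → ℝ}
    (h : ∀ j ∈ Icc 1 n, X j = Y j) : LformN n twok r X = LformN n twok r Y :=
  sum_congr rfl fun j hj ↦ by rw [h j hj]

lemma LformN_affine_add_single {n twok : ℕ} {r : ℕ → ℕ} (hn : 1 ≤ n) (a b d : ℝ) :
    LformN n twok r (fun j ↦ a + b * j + if j = 1 then d else 0) =
      a * LformN n twok r 1 + b * LformN n twok r (fun j ↦ j) + d := by
  simp only [LformN, mul_add, mul_ite, mul_zero, sum_add_distrib, sum_ite_eq', mem_Icc, le_refl,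
    hn, and_self, if_true, Pi.one_apply, mul_one, mul_sum, signPatN_one]
  push_cast
  rw [one_mul]
  congr 2 <;> exact sum_congr rfl fun _ _ ↦ by ring

theorem stmt6_general (n k : ℕ) (hn4 : 4 ≤ n) (hne : Even n)
    (Φ φ2 : ℝ) (XD : ℕ → ℝ)
    (hXD1 : XD 1 = ((n : ℝ) - 1) * φ2 + ((n : ℝ) - 1) * ((n : ℝ) - 2) / 2 * Φ)
    (hXDj : ∀ j : ℕ, 2 ≤ j → j ≤ n → XD j = -φ2 - ((n : ℝ) - j) * Φ)
    (r : ℕ → ℕ)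
    (hinc : ∀ j : ℕ, 1 ≤ j → j < 2 * k → r j < r (j + 1))
    (hlb : 1 ≤ r 1) (hub : r (2 * k) ≤ n) :
    LformN n (2 * k) r XD =
      (n : ℝ) * φ2 + (n : ℝ) * ((n : ℝ) - 1) / 2 * Φ
        - (φ2 + (n : ℝ) * Φ) * (SigI k r : ℝ)
        + Φ * LformN n (2 * k) r (fun j => (j : ℝ)) ∧
    LformN n (2 * k) r XD =
      (n : ℝ) * φ2 + (n : ℝ) * ((n : ℝ) - 2) / 2 * Φ
        - (φ2 + (n : ℝ) * Φ - Φ / 2) * (SigI k r : ℝ)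
        + Φ * (WsigI k r : ℝ) := by
  have hr : StrictMonoOn r (Set.Icc 1 (2 * k)) :=
    strictMonoOn_of_lt_add_one Set.ordConnected_Icc fun j _ hj hj1 ↦ hinc j hj.1 hj1.2
  have hR := image_Icc_subset_Icc hr hlb hub
  have heven : Even (n + 2 * k) := hne.add (even_two_mul k)
  have hXD : ∀ j ∈ Icc 1 n, XD j =
      -(φ2 + n * Φ) + Φ * j + if j = 1 then n * φ2 + n * (n - 1) / 2 * Φ else 0 := by
    intro j hj
    rcases eq_or_ne j 1 with rfl | hj1
    · rw [hXD1, if_pos rfl]; push_cast; ring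
    · rw [hXDj j (by grind) (mem_Icc.mp hj).2, if_neg hj1]; ring
  have hW := two_mul_LformN_natCast hr hR heven
  rw [LformN_congr hXD, LformN_affine_add_single (by omega), LformN_one hr hR heven]
  push_cast [SigI, WsigI]
  constructor
  · ring
  · linear_combination (Φ / 2) * hW

theorem stmt6 (n k : ℕ) (hn4 : 4 ≤ n) (hne : Even n) (hk1 : 1 ≤ k) (hk2 : k ≤ n / 2)
    (Φ φ2 : ℝ) (XD : ℕ → ℝ)
    (hXD1 : XD 1 = ((n : ℝ) - 1) * φ2 + ((n : ℝ) - 1) * ((n : ℝ) - 2) / 2 * Φ)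
    (hXDj : ∀ j : ℕ, 2 ≤ j → j ≤ n → XD j = -φ2 - ((n : ℝ) - j) * Φ)
    (r : ℕ → ℕ)
    (hinc : ∀ j : ℕ, 1 ≤ j → j < 2 * k → r j < r (j + 1))
    (hlb : 1 ≤ r 1) (hub : r (2 * k) ≤ n) :
    LformN n (2 * k) r XD =
      (n : ℝ) * φ2 + (n : ℝ) * ((n : ℝ) - 1) / 2 * Φ
        - (φ2 + (n : ℝ) * Φ) * (SigI k r : ℝ)
        + Φ * LformN n (2 * k) r (fun j => (j : ℝ)) ∧
    LformN n (2 * k) r XD =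
      (n : ℝ) * φ2 + (n : ℝ) * ((n : ℝ) - 2) / 2 * Φ
        - (φ2 + (n : ℝ) * Φ - Φ / 2) * (SigI k r : ℝ)
        + Φ * (WsigI k r : ℝ) :=
  stmt6_general n k hn4 hne Φ φ2 XD hXD1 hXDj r hinc hlb hub
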